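/- In the monoid Π_N = ⟨a, b | baa(ba)^N = a⟩ with N ≥ 2, for every k ≥ 1 the equality b^{2k} · a^{2k} · a = a · (ba)^{s'_N(k) − 1} holds, where s'_N(0) = 1 and s'_N(n) = N²·s'_N(n−1) − N + 1. -/

import Mathlib

inductive AB : Type
  | a : AB
  | b : AB

/-- The generator `a` as a word in the free monoid on `{a, b}`. -/
def wa : FreeMonoid AB := FreeMonoid.of AB.a

/-- The generator `b` as a word in the free monoid on `{a, b}`. -/
def wb : FreeMonoid AB := FreeMonoid.of AB.b

/-- The single defining relation `baa(ba)^N = a` of `Π_N`. -/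
def piRel (N : ℕ) : FreeMonoid AB → FreeMonoid AB → Prop :=
  fun x y => x = wb * wa * wa * (wb * wa) ^ N ∧ y = wa

/-- Equality in `Π_N`, i.e. the congruence on the free monoid generated by the relation. -/
def piEq (N : ℕ) : FreeMonoid AB → FreeMonoid AB → Prop :=
  fun u v => conGen (piRel N) u v

def sN' (N : ℕ) : ℕ → ℕ
  | 0 => 1
  | n+1 => N^2 * sN' N n - N + 1


/-!
Write `t = ba`. The relation reads `t a t^N = a`, hence `t^m a t^{mN} = a` for every `m`. Using
this twice, once to expand the last `a` and once to collapse the middle, gives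
`b t^m a a = b (t^m a t^{mN}) a t^{mN²} = b a a t^{mN²} = a t^{mN² - N}` for `m ≥ 1`.
Since `b^{2k+2} a^{2k+2} a = b b (b^{2k} a^{2k} a) a a` and `b b a t^{s-1} = b t^s`, induction
on `k` turns `s'_N(k) - 1` into `N² s'_N(k) - N = s'_N(k+1) - 1`. The argument holds in any
monoid in which the relation holds, and is transported to `Π_N` through its quotient monoid.
-/

lemma one_le_sN' (N k : ℕ) : 1 ≤ sN' N k := by
  cases k <;> simp [sN']

lemma sN'_succ_sub_one (N k : ℕ) : sN' N (k + 1) - 1 = N ^ 2 * sN' N k - N := by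
  simp [sN']

section Relation

variable {M : Type*} [Monoid M] {a b : M} {N : ℕ}

lemma pow_mul_mul_pow_mul_eq_of_rel (h : b * a * a * (b * a) ^ N = a) (m : ℕ) :
    (b * a) ^ m * a * (b * a) ^ (m * N) = a := by
  induction m with
  | zero => simp
  | succ m ih =>
    calc (b * a) ^ (m + 1) * a * (b * a) ^ ((m + 1) * N)
        = (b * a) ^ m * (b * a * a * (b * a) ^ N) * (b * a) ^ (m * N) := by
          rw [pow_succ (b * a) m, add_one_mul, add_comm (m * N), pow_add]; simp only [mul_assoc]
      _ = a := by rw [h, ih]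

lemma mul_pow_mul_mul_eq_of_rel (h : b * a * a * (b * a) ^ N = a) {m : ℕ} (hm : 1 ≤ m) :
    b * (b * a) ^ m * a * a = a * (b * a) ^ (N ^ 2 * m - N) := by
  have hN : N ≤ m * N * N :=
    (Nat.le_mul_self N).trans (by rw [mul_assoc]; exact Nat.le_mul_of_pos_left _ hm)
  calc b * (b * a) ^ m * a * a
      = b * (b * a) ^ m * a * ((b * a) ^ (m * N) * a * (b * a) ^ (m * N * N)) := by
        rw [pow_mul_mul_pow_mul_eq_of_rel h (m * N)]
    _ = b * ((b * a) ^ m * a * (b * a) ^ (m * N)) * a * (b * a) ^ (m * N * N) := by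
        simp only [mul_assoc]
    _ = b * a * a * (b * a) ^ N * (b * a) ^ (m * N * N - N) := by
        rw [pow_mul_mul_pow_mul_eq_of_rel h, mul_assoc _ ((b * a) ^ N), ← pow_add,
          Nat.add_sub_cancel' hN]
    _ = a * (b * a) ^ (N ^ 2 * m - N) := by
        rw [h, show N ^ 2 * m = m * N * N by ring]

lemma pow_mul_pow_mul_eq_of_rel (h : b * a * a * (b * a) ^ N = a) (k : ℕ) :
    b ^ (2 * k) * a ^ (2 * k) * a = a * (b * a) ^ (sN' N k - 1) := by
  induction k with
  | zero => simp [sN']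
  | succ k ih =>
    have hs := one_le_sN' N k
    calc b ^ (2 * (k + 1)) * a ^ (2 * (k + 1)) * a
        = b * b * (b ^ (2 * k) * a ^ (2 * k) * a) * a * a := by
          rw [mul_add_one, pow_add a, add_comm (2 * k) 2, pow_add b, pow_two, pow_two]
          simp only [mul_assoc]
      _ = b * (b * a) ^ (1 + (sN' N k - 1)) * a * a := by
          rw [ih, pow_add, pow_one]; simp only [mul_assoc]
      _ = a * (b * a) ^ (sN' N (k + 1) - 1) := by
          rw [Nat.add_sub_cancel' hs, sN'_succ_sub_one, mul_pow_mul_mul_eq_of_rel h hs]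

end Relation

theorem stmt_13_general (N : ℕ) (k : ℕ) :
    piEq N (wb ^ (2 * k) * wa ^ (2 * k) * wa) (wa * (wb * wa) ^ (sN' N k - 1)) := by
  set π := (conGen (piRel N)).mk'
  have hrel : π (wb * wa * wa * (wb * wa) ^ N) = π wa :=
    (Con.eq _).mpr (ConGen.Rel.of _ _ ⟨rfl, rfl⟩)
  simp only [map_mul, map_pow] at hrel
  refine (Con.eq _).mp (?_ : π _ = π _)
  simp only [map_mul, map_pow]
  exact pow_mul_pow_mul_eq_of_rel hrel k

theorem stmt_13 (N : ℕ) (hN : 2 ≤ N) (k : ℕ) (hk : 1 ≤ k) :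
    piEq N (wb ^ (2 * k) * wa ^ (2 * k) * wa) (wa * (wb * wa) ^ (sN' N k - 1)) :=
  stmt_13_general N k
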